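/- Let $K$ be a field of characteristic $0$ and $V$ a finite-dimensional $K$-vector space with $\dim V \neq 2$. If $Q_1$ and $Q_2$ are nondegenerate quadratic forms on $V$ such that the special orthogonal groups $\mathrm{SO}(Q_1)$ and $\mathrm{SO}(Q_2)$ are equal as subgroups of $\mathrm{GL}(V)$, then there exists $\lambda \in K^*$ with $Q_2 = \lambda Q_1$. -/

import Mathlib

/-!
Take a `Q₁`-orthogonal basis `e`. For pairwise `Q₁`-orthogonal `u, v, w` with `u, w` anisotropic,
the product of the `Q₁`-reflections in `u` and `w` lies in `SO(Q₁) = SO(Q₂)`, negates `u` and fixes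
`v`, so `u` and `v` are `Q₂`-orthogonal. When `dim V ≥ 3` every pair of basis vectors has a third
one orthogonal to both; this shows that `e` is `Q₂`-orthogonal, and, applied to a suitable
orthogonal pair in the plane of `e i` and `e j`, that `Q₂ (e i) / Q₁ (e i) = Q₂ (e j) / Q₁ (e j)`.
In dimension `≤ 1` there are no such pairs and the same conclusion holds vacuously.
-/

open Module QuadraticMap

theorem Module.det_preReflection {R M : Type*} [CommRing R] [AddCommGroup M] [Module R M]
    [Module.Free R M] [Module.Finite R M] (x : M) (f : Dual R M) :
    LinearMap.det (preReflection x f) = 1 - f x := by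
  classical
  let b := Module.Free.chooseBasis R M
  rw [← LinearMap.det_toMatrix b, preReflection, map_sub, LinearMap.toMatrix_id,
    LinearMap.toMatrix_smulRight, Matrix.vecMulVec_eq (ι := Unit), Matrix.det_one_sub_mul_comm,
    Matrix.det_unique, Matrix.sub_apply, Matrix.one_apply_eq,
    Matrix.replicateRow_mul_replicateCol_apply]
  conv_rhs => rw [← b.sum_repr x, map_sum]
  simp only [dotProduct, Function.comp_apply, map_smul, smul_eq_mul, mul_comm]

theorem exists_ne_zero_add_sq_mul_ne_zero {K : Type*} [Field K] [CharZero K] (a : K) {b : K}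
    (hb : b ≠ 0) :
    ∃ t : K, t ≠ 0 ∧ a + t ^ 2 * b ≠ 0 := by
  by_cases h : a + b = 0
  · refine ⟨2, two_ne_zero, fun h' => hb ?_⟩
    have h3 : (3 : K) * b = 0 := by linear_combination h' - h
    exact (mul_eq_zero.mp h3).resolve_left three_ne_zero
  · exact ⟨1, one_ne_zero, by simpa using h⟩

theorem Fintype.exists_ne_ne_of_card_ne_two {ι : Type*} [Fintype ι] (hcard : Fintype.card ι ≠ 2)
    {i j : ι} (hij : i ≠ j) : ∃ k, k ≠ i ∧ k ≠ j := by
  classical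
  have hle := Finset.card_le_univ ({i, j} : Finset ι)
  rw [Finset.card_pair hij] at hle
  obtain ⟨k, -, hk⟩ := Finset.exists_mem_notMem_of_card_lt_card (s := {i, j}) (t := .univ)
    (by rw [Finset.card_pair hij, Finset.card_univ]; omega)
  simp only [Finset.mem_insert, Finset.mem_singleton, not_or] at hk
  exact ⟨k, hk⟩

namespace QuadraticMap

variable {K V : Type*} [Field K] [AddCommGroup V] [Module K V]

def specialOrthogonal (Q : QuadraticForm K V) : Set (V ≃ₗ[K] V) :=
  {g | (∀ v, Q (g v) = Q v) ∧ LinearEquiv.det g = 1}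

theorem polar_map_of_forall_map_eq (Q : QuadraticForm K V) {g : V ≃ₗ[K] V}
    (hg : ∀ v, Q (g v) = Q v) (x y : V) : polar Q (g x) (g y) = polar Q x y := by
  simp only [polar, ← map_add, hg]

section Reflection

variable (Q : QuadraticForm K V) {v : V} (hv : Q v ≠ 0)
include hv

theorem inv_mul_polar_self : (Q v)⁻¹ * polar Q v v = 2 := by
  rw [polar_self, nsmul_eq_mul, Nat.cast_ofNat, mul_left_comm, inv_mul_cancel₀ hv, mul_one]

noncomputable def reflection : V ≃ₗ[K] V :=
  Module.reflection (x := v) (f := (Q v)⁻¹ • polarBilin Q v) (Q.inv_mul_polar_self hv)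

theorem reflection_apply (y : V) :
    Q.reflection hv y = y - ((Q v)⁻¹ * polar Q v y) • v :=
  Module.reflection_apply _ _

@[simp]
theorem reflection_apply_self : Q.reflection hv v = -v :=
  Module.reflection_apply_self _

theorem reflection_apply_of_polar_eq_zero {y : V} (hy : polar Q v y = 0) :
    Q.reflection hv y = y := by
  rw [reflection_apply, hy, mul_zero, zero_smul, sub_zero]

theorem map_reflection (y : V) : Q (Q.reflection hv y) = Q y := by
  rw [reflection_apply, sub_eq_add_neg, ← neg_smul, QuadraticMap.map_add Q, QuadraticMap.map_smul,
    polar_smul_right, polar_comm Q y v, smul_eq_mul, smul_eq_mul]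
  field_simp
  ring

theorem det_reflection [FiniteDimensional K V] : LinearEquiv.det (Q.reflection hv) = -1 := by
  ext
  rw [LinearEquiv.coe_det]
  refine (Module.det_preReflection _ _).trans ?_
  rw [LinearMap.smul_apply, polarBilin_apply_apply, smul_eq_mul, Q.inv_mul_polar_self hv]
  norm_num

end Reflection

theorem reflection_trans_reflection_mem_specialOrthogonal [FiniteDimensional K V]
    (Q : QuadraticForm K V) {v w : V} (hv : Q v ≠ 0) (hw : Q w ≠ 0) :
    (Q.reflection hw).trans (Q.reflection hv) ∈ Q.specialOrthogonal := by
  refine ⟨fun x => ?_, ?_⟩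
  · simp only [LinearEquiv.trans_apply, map_reflection]
  · rw [LinearEquiv.det_trans, det_reflection, det_reflection, neg_one_mul, neg_neg]

section SpecialOrthogonal

variable [FiniteDimensional K V] {Q₁ Q₂ : QuadraticForm K V}

theorem polar_eq_zero_of_specialOrthogonal_subset [NeZero (2 : K)]
    (hSO : Q₁.specialOrthogonal ⊆ Q₂.specialOrthogonal) {u v w : V} (hu : Q₁ u ≠ 0)
    (hw : Q₁ w ≠ 0) (huv : polar Q₁ u v = 0) (hwu : polar Q₁ w u = 0) (hwv : polar Q₁ w v = 0) :
    polar Q₂ u v = 0 := by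
  have hg := hSO (Q₁.reflection_trans_reflection_mem_specialOrthogonal hu hw)
  have h := polar_map_of_forall_map_eq Q₂ hg.1 u v
  simp only [LinearEquiv.trans_apply, reflection_apply_of_polar_eq_zero _ hw hwu,
    reflection_apply_of_polar_eq_zero _ hw hwv, reflection_apply_of_polar_eq_zero _ hu huv,
    reflection_apply_self, polar_neg_left] at h
  have h2 : (2 : K) * polar Q₂ u v = 0 := by linear_combination -h
  exact (mul_eq_zero.mp h2).resolve_left two_ne_zero

theorem mul_eq_mul_of_specialOrthogonal_subset [CharZero K]
    (hSO : Q₁.specialOrthogonal ⊆ Q₂.specialOrthogonal) {x y w : V} (hy : Q₁ y ≠ 0)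
    (hw : Q₁ w ≠ 0) (hxy : polar Q₁ x y = 0) (hwx : polar Q₁ w x = 0) (hwy : polar Q₁ w y = 0) :
    Q₂ x * Q₁ y = Q₂ y * Q₁ x := by
  have hyx₂ : polar Q₂ y x = 0 :=
    polar_eq_zero_of_specialOrthogonal_subset hSO hy hw (by rwa [polar_comm]) hwy hwx
  obtain ⟨t, ht, hu⟩ := exists_ne_zero_add_sq_mul_ne_zero (Q₁ x) hy
  -- `x + t • y` is anisotropic and `Q₁`-orthogonal to `(t * Q₁ y) • x - Q₁ x • y`
  have key := polar_eq_zero_of_specialOrthogonal_subset hSO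
    (u := x + t • y) (v := (t * Q₁ y) • x - Q₁ x • y) ?_ hw ?_ ?_ ?_
  · simp only [polar_add_left, polar_smul_left, polar_sub_right, polar_smul_right, polar_self,
      polar_comm Q₂ x y, hyx₂, smul_eq_mul, nsmul_eq_mul] at key
    have h : (2 * t) * (Q₂ x * Q₁ y - Q₂ y * Q₁ x) = 0 := by linear_combination key
    exact sub_eq_zero.mp ((mul_eq_zero.mp h).resolve_left (mul_ne_zero two_ne_zero ht))
  · rw [QuadraticMap.map_add Q₁, QuadraticMap.map_smul, polar_smul_right, hxy, smul_eq_mul,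
      smul_zero, add_zero, ← pow_two]
    exact hu
  · simp only [polar_add_left, polar_smul_left, polar_sub_right, polar_smul_right, polar_self,
      polar_comm Q₁ y x, hxy, smul_eq_mul, nsmul_eq_mul]
    ring
  · rw [polar_add_right, polar_smul_right, hwx, hwy, smul_zero, add_zero]
  · rw [polar_sub_right, polar_smul_right, polar_smul_right, hwx, hwy, smul_zero, smul_zero,
      sub_zero]

end SpecialOrthogonal

theorem apply_basis_ne_zero_of_nondegenerate {Q : QuadraticForm K V} {ι : Type*} {e : Basis ι K V}
    (he : (polarBilin Q).IsOrthoᵢ e) (hQ : (polarBilin Q).Nondegenerate) (i : ι) :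
    Q (e i) ≠ 0 := fun h => he.not_isOrtho_basis_self_of_separatingLeft hQ.1 i
  (by rw [polarBilin_apply_apply, polar_self, h, smul_zero])

theorem exists_unit_eq_smul_of_basis [NeZero (2 : K)] {ι : Type*} (e : Basis ι K V)
    {Q₁ Q₂ : QuadraticForm K V} (h₁ : (polarBilin Q₁).IsOrthoᵢ e) (h₂ : (polarBilin Q₂).IsOrthoᵢ e)
    (hQ₁ : ∀ i, Q₁ (e i) ≠ 0) (hQ₂ : ∀ i, Q₂ (e i) ≠ 0)
    (hratio : ∀ i j, Q₂ (e i) * Q₁ (e j) = Q₂ (e j) * Q₁ (e i)) :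
    ∃ c : Kˣ, Q₂ = (c : K) • Q₁ := by
  obtain ⟨c, hc⟩ : ∃ c : Kˣ, ∀ i, Q₂ (e i) = c * Q₁ (e i) := by
    rcases isEmpty_or_nonempty ι with hι | ⟨⟨i₀⟩⟩
    · exact ⟨1, isEmptyElim⟩
    · refine ⟨Units.mk0 _ (div_ne_zero (hQ₂ i₀) (hQ₁ i₀)), fun i => ?_⟩
      rw [Units.val_mk0, div_mul_eq_mul_div, eq_div_iff (hQ₁ i₀), hratio]
  refine ⟨c, polarBilin_injective (Ne.isUnit two_ne_zero) (LinearMap.BilinForm.ext_basis e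
    fun i j => ?_)⟩
  rcases eq_or_ne i j with rfl | hij
  · simp only [polarBilin_apply_apply, polar_self, hc, nsmul_eq_mul, FunLike.coe_smul,
      polar_smul, smul_eq_mul]
    ring
  · simp only [h₂ hij, polarBilin_apply_apply, FunLike.coe_smul, polar_smul,
      show polar Q₁ (e i) (e j) = 0 from h₁ hij, smul_eq_mul, mul_zero]

end QuadraticMap

theorem stmt_0 {K V : Type*} [Field K] [CharZero K] [AddCommGroup V] [Module K V]
    [FiniteDimensional K V] (hdim : Module.finrank K V ≠ 2)
    (Q₁ Q₂ : QuadraticForm K V)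
    (h₁ : LinearMap.BilinForm.Nondegenerate (QuadraticMap.polarBilin Q₁))
    (h₂ : LinearMap.BilinForm.Nondegenerate (QuadraticMap.polarBilin Q₂))
    (hSO : {g : V ≃ₗ[K] V | (∀ v, Q₁ (g v) = Q₁ v) ∧ LinearEquiv.det g = 1} =
      {g : V ≃ₗ[K] V | (∀ v, Q₂ (g v) = Q₂ v) ∧ LinearEquiv.det g = 1}) :
    ∃ lam : Kˣ, Q₂ = (lam : K) • Q₁ := by
  let _ : Invertible (2 : K) := invertibleOfNonzero two_ne_zero
  obtain ⟨e, he₁⟩ := LinearMap.BilinForm.exists_orthogonal_basis (B := polarBilin Q₁)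
    ⟨polar_comm Q₁⟩
  have hSO' : Q₁.specialOrthogonal ⊆ Q₂.specialOrthogonal := hSO.subset
  have hthird : ∀ {i j : Fin (finrank K V)}, i ≠ j → ∃ k, k ≠ i ∧ k ≠ j :=
    Fintype.exists_ne_ne_of_card_ne_two (by rwa [Fintype.card_fin])
  have hQ₁ := apply_basis_ne_zero_of_nondegenerate he₁ h₁
  have he₂ : (polarBilin Q₂).IsOrthoᵢ e := fun i j hij => by
    obtain ⟨k, hki, hkj⟩ := hthird hij
    exact polar_eq_zero_of_specialOrthogonal_subset hSO' (hQ₁ i) (hQ₁ k) (he₁ hij) (he₁ hki)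
      (he₁ hkj)
  refine exists_unit_eq_smul_of_basis e he₁ he₂ hQ₁
    (apply_basis_ne_zero_of_nondegenerate he₂ h₂) fun i j => ?_
  rcases eq_or_ne i j with rfl | hij
  · rfl
  · obtain ⟨k, hki, hkj⟩ := hthird hij
    exact mul_eq_mul_of_specialOrthogonal_subset hSO' (hQ₁ j) (hQ₁ k) (he₁ hij) (he₁ hki)
      (he₁ hkj)
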